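/- Let ∇⁻ be the discrete derivative ∇⁻f(x) = f(x) − f(x−1) on functions ℤ → ℝ, and Q(x,y) = 2^{y−x}𝟙{x>y}. Then the kernel of e^{−(t/2)∇⁻} Q^{−n} composed appropriately, i.e. S(z_1,z_2) := (e^{−(t/2)∇⁻} Q^{−n})*(z_1,z_2), is given by the contour integral (1/2πi)∮_{Γ_0} dw (1−w)^n e^{t(w−1/2)} / (2^{z_2−z_1} w^{n+1+z_2−z_1}). -/

import Mathlib

open Complex

/-- Kernel of `e^{a∇⁻}`, defined via the power series in `∇⁻` (whose `k`-th power has kernel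
`(∇⁻)^k(x,y) = (−1)^{x−y} C(k, x−y) 𝟙{0 ≤ x−y ≤ k}`). -/
noncomputable def expNablaMinusKer (a : ℝ) (x y : ℤ) : ℂ :=
  ∑' k : ℕ, (a : ℂ) ^ k / (Nat.factorial k : ℂ) *
    (if 0 ≤ x - y ∧ x - y ≤ (k : ℤ) then
      (-1 : ℂ) ^ (x - y).toNat * (Nat.choose k (x - y).toNat : ℂ) else 0)

/-- Kernel of `Q⁻¹ = I + 2∇⁺`: `(Q⁻¹f)(x) = −f(x) + 2f(x+1)`. -/
noncomputable def QinvKer (x y : ℤ) : ℂ :=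
  (if y = x then -1 else 0) + (if y = x + 1 then 2 else 0)

/-- Kernel of `Q^{−n} = (I + 2∇⁺)^n`. -/
noncomputable def QinvPow : ℕ → ℤ → ℤ → ℂ
  | 0 => fun x y => if x = y then 1 else 0
  | n + 1 => fun x y => ∑' z : ℤ, QinvPow n x z * QinvKer z y

/-!
Write `S` for the backward shift, so that `∇⁻ = I - S` and `Q⁻¹ = 2S⁻¹ - I`. Then
`e^{a∇⁻} = e^a e^{-aS}` has kernel `e^a (-a)^m / m!` at `x - y = m ≥ 0`, and `Q^{-n}` has kernel
`(-1)^{n+k} 2^k C(n, k)` at `y - x = k`, so the left side is a finite sum over `k ≤ n`.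
Expanding `(1 - w)^n` binomially turns the contour integral into the same finite sum, because the
residue of `e^{tw} / w^{m+1}` at `0` is `t^m / m!`; the powers of `2` match by homogeneity of
`t^m / m!` in `t`.
-/

open Finset

/-- The coefficient of `w ^ m` in `e^{tw}`, extended by zero to negative `m`. -/
noncomputable def expCoeff (t : ℂ) : ℤ → ℂ
  | .ofNat m => t ^ m / m.factorial
  | .negSucc _ => 0

@[simp]
lemma expCoeff_natCast (t : ℂ) (m : ℕ) : expCoeff t m = t ^ m / m.factorial := rfl

@[simp]
lemma expCoeff_negSucc (t : ℂ) (m : ℕ) : expCoeff t (Int.negSucc m) = 0 := rfl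

lemma expCoeff_mul (c t : ℂ) (m : ℤ) : expCoeff (c * t) m = c ^ m * expCoeff t m := by
  cases m with
  | ofNat m => simp [mul_pow, mul_div_assoc]
  | negSucc m => simp

lemma hasSum_choose_mul_pow_div_factorial (a : ℂ) (d : ℕ) :
    HasSum (fun k : ℕ => (k.choose d : ℂ) * a ^ k / k.factorial)
      (a ^ d / d.factorial * exp a) := by
  rw [← hasSum_nat_add_iff' d]
  have hlow : ∑ k ∈ range d, (k.choose d : ℂ) * a ^ k / k.factorial = 0 :=
    sum_eq_zero fun k hk => by simp [Nat.choose_eq_zero_of_lt (mem_range.mp hk)]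
  rw [hlow, sub_zero, exp_eq_exp_ℂ]
  have hshift : (fun i : ℕ => ((i + d).choose d : ℂ) * a ^ (i + d) / (i + d).factorial)
      = fun i => a ^ d / d.factorial * (a ^ i / i.factorial) := by
    funext i
    have hfact : ((i + d).choose d : ℂ) * i.factorial * d.factorial = (i + d).factorial := by
      exact_mod_cast Nat.add_choose_mul_factorial_mul_factorial i d
    have hchoose : ((i + d).choose d : ℂ) ≠ 0 := by
      exact_mod_cast (Nat.choose_pos (Nat.le_add_left d i)).ne'
    rw [← hfact]
    field_simp
    ring
  rw [hshift]
  exact (NormedSpace.expSeries_div_hasSum_exp a).mul_left _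

lemma expNablaMinusKer_eq (a : ℝ) (x y : ℤ) :
    expNablaMinusKer a x y = exp a * expCoeff (-a) (x - y) := by
  unfold expNablaMinusKer
  generalize x - y = m
  cases m with
  | ofNat d =>
    have hterm : ∀ k : ℕ, (a : ℂ) ^ k / k.factorial *
        (if 0 ≤ Int.ofNat d ∧ Int.ofNat d ≤ (k : ℤ) then
          (-1 : ℂ) ^ (Int.ofNat d).toNat * (k.choose (Int.ofNat d).toNat : ℂ) else 0)
        = (-1) ^ d * ((k.choose d : ℂ) * a ^ k / k.factorial) := by
      intro k
      by_cases hdk : d ≤ k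
      · simp only [Int.ofNat_eq_natCast, Int.toNat_natCast, Nat.cast_nonneg, Nat.cast_le, hdk,
          and_self, if_true]
        ring
      · simp [hdk, Nat.choose_eq_zero_of_lt (not_le.mp hdk)]
    rw [tsum_congr hterm, ((hasSum_choose_mul_pow_div_factorial a d).mul_left _).tsum_eq]
    rw [show Int.ofNat d = (d : ℤ) from rfl, expCoeff_natCast, neg_pow]
    ring
  | negSucc d => simp

lemma tsum_mul_QinvKer (f : ℤ → ℂ) (y : ℤ) :
    ∑' z, f z * QinvKer z y = 2 * f (y - 1) - f y := by
  rw [tsum_eq_sum (s := {y - 1, y}) fun z hz => ?_, sum_pair (by omega)]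
  · simp [QinvKer, mul_comm, sub_eq_add_neg]
  · simp only [mem_insert, mem_singleton, not_or] at hz
    simp [QinvKer, Ne.symm hz.2, show y ≠ z + 1 by omega]

lemma QinvPow_succ_apply (n : ℕ) (x y : ℤ) :
    QinvPow (n + 1) x y = 2 * QinvPow n x (y - 1) - QinvPow n x y :=
  tsum_mul_QinvKer _ y

lemma QinvPow_eq_zero_of_lt (n : ℕ) {x y : ℤ} (h : y < x) : QinvPow n x y = 0 := by
  induction n generalizing y with
  | zero => simp [QinvPow, h.ne']
  | succ n ih => rw [QinvPow_succ_apply, ih (by omega), ih h]; ring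

lemma QinvPow_add_natCast (n : ℕ) (x : ℤ) (k : ℕ) :
    QinvPow n x (x + k) = (-1) ^ (k + n) * 2 ^ k * n.choose k := by
  induction n generalizing k with
  | zero =>
    cases k with
    | zero => simp [QinvPow]
    | succ k => simp [QinvPow]; omega
  | succ n ih =>
    rw [QinvPow_succ_apply]
    cases k with
    | zero =>
      have h0 := ih 0
      simp only [Nat.cast_zero, add_zero] at h0
      simp [QinvPow_eq_zero_of_lt, h0, pow_succ]
    | succ k =>
      rw [show x + ↑(k + 1) - 1 = x + k by push_cast; ring, ih k, ih (k + 1),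
        Nat.choose_succ_succ]
      push_cast
      ring

lemma tsum_mul_QinvPow (f : ℤ → ℂ) (n : ℕ) (y : ℤ) :
    ∑' z, f z * QinvPow n z y
      = ∑ j ∈ range (n + 1), (-1) ^ (j + n) * 2 ^ j * n.choose j * f (y - j) := by
  have hinj : Set.InjOn (fun j : ℕ => y - j) (range (n + 1)) := fun i _ j _ h => by
    simpa using h
  rw [tsum_eq_sum (s := (range (n + 1)).image fun j : ℕ => y - j) fun z hz => ?_,
    sum_image hinj]
  · refine sum_congr rfl fun j _ => ?_
    rw [← QinvPow_add_natCast n (y - j) j, sub_add_cancel, mul_comm]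
  · rcases lt_or_ge y z with hyz | hzy
    · rw [QinvPow_eq_zero_of_lt n hyz, mul_zero]
    · obtain ⟨k, rfl⟩ : ∃ k : ℕ, y = z + k := ⟨(y - z).toNat, by omega⟩
      have hkn : n < k := by
        by_contra! hkn
        exact hz (mem_image.mpr ⟨k, mem_range.mpr (by omega), by simp⟩)
      rw [QinvPow_add_natCast, Nat.choose_eq_zero_of_lt hkn]
      simp

lemma circleIntegrable_exp_mul_div_zpow (t : ℂ) {R : ℝ} (hR : 0 < R) (k : ℤ) :
    CircleIntegrable (fun w => exp (t * w) / w ^ k) 0 R := by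
  refine ContinuousOn.circleIntegrable hR.le ?_
  refine (continuous_const.mul continuous_id).cexp.continuousOn.div
    (continuousOn_id.zpow₀ k fun w hw => Or.inl (ne_zero_of_mem_sphere hR.ne' ⟨w, hw⟩))
    fun w hw => zpow_ne_zero k (ne_zero_of_mem_sphere hR.ne' ⟨w, hw⟩)

lemma circleIntegral_exp_mul_div_zpow (t : ℂ) {R : ℝ} (hR : 0 < R) (m : ℤ) :
    ∮ w in C(0, R), exp (t * w) / w ^ (m + 1) = 2 * Real.pi * I * expCoeff t m := by
  have hexp : Differentiable ℂ fun w => exp (t * w) :=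
    (differentiable_id.const_mul t).cexp
  cases m with
  | ofNat m =>
    have hcauchy := hexp.differentiableOn.circleIntegral_one_div_sub_center_pow_smul
      (c := 0) hR m
    rw [iteratedDeriv_cexp_const_mul] at hcauchy
    simp only [sub_zero, smul_eq_mul, mul_zero, exp_zero, mul_one] at hcauchy
    rw [show Int.ofNat m = (m : ℤ) from rfl, expCoeff_natCast,
      show (m : ℤ) + 1 = ((m + 1 : ℕ) : ℤ) by push_cast; rfl]
    simp_rw [zpow_natCast]
    convert hcauchy using 1
    · exact circleIntegral.integral_congr hR.le fun w _ => by ring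
    · ring
  | negSucc m =>
    have hentire : Differentiable ℂ fun w => exp (t * w) * w ^ m :=
      hexp.mul (differentiable_pow _)
    rw [expCoeff_negSucc, mul_zero, Int.negSucc_eq, show -((m : ℤ) + 1) + 1 = -m by ring]
    simp_rw [zpow_neg, zpow_natCast, div_inv_eq_mul]
    exact hentire.diffContOnCl.circleIntegral_eq_zero hR.le

lemma circleIntegral_one_sub_pow_mul_exp_div_zpow (t : ℂ) {R : ℝ} (hR : 0 < R) (n : ℕ) (d : ℤ) :
    ∮ w in C(0, R), (1 - w) ^ n * exp (t * w) / w ^ ((n : ℤ) + 1 + d)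
      = 2 * Real.pi * I *
          ∑ j ∈ range (n + 1), (-1) ^ (j + n) * n.choose j * expCoeff t (d + j) := by
  have hexpand : ∀ w ∈ Metric.sphere (0 : ℂ) R,
      (1 - w) ^ n * exp (t * w) / w ^ ((n : ℤ) + 1 + d)
        = ∑ j ∈ range (n + 1), (-1) ^ (j + n) * n.choose j * (exp (t * w) / w ^ (d + j + 1)) := by
    intro w hw
    have hw0 : w ≠ 0 := ne_zero_of_mem_sphere hR.ne' ⟨w, hw⟩
    rw [sub_pow, sum_mul, sum_div]
    refine sum_congr rfl fun j hj => ?_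
    have hexponent : (n : ℤ) + 1 + d = (n - j : ℕ) + (d + j + 1) := by
      rw [Nat.cast_sub (Nat.lt_succ_iff.mp (mem_range.mp hj))]
      ring
    rw [hexponent, zpow_add₀ hw0, zpow_natCast, one_pow]
    field_simp
  have hintegrable : ∀ j ∈ range (n + 1), CircleIntegrable
      (fun w => (-1) ^ (j + n) * n.choose j * (exp (t * w) / w ^ (d + j + 1))) 0 R :=
    fun j _ => (circleIntegrable_exp_mul_div_zpow t hR _).const_fun_smul
  rw [circleIntegral.integral_congr hR.le hexpand, circleIntegral.integral_fun_sum hintegrable,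
    mul_sum]
  refine sum_congr rfl fun j _ => ?_
  rw [circleIntegral.integral_const_mul, circleIntegral_exp_mul_div_zpow t hR]
  ring

/-- The kernel `S(z₁,z₂) = (e^{−(t/2)∇⁻} Q^{−n})^*(z₁,z₂)` is given by the contour integral
`(1/2πi)∮ dw (1−w)^n e^{t(w−1/2)} / (2^{z₂−z₁} w^{n+1+z₂−z₁})`. -/
theorem SM_contour_formula (t : ℝ) (n : ℕ) (R : ℝ) (hR : 0 < R) (z₁ z₂ : ℤ) :
    (∑' z : ℤ, expNablaMinusKer (-(t / 2)) z₂ z * QinvPow n z z₁)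
      = (2 * Real.pi * I)⁻¹ *
          ∮ w in C(0, R), (1 - w) ^ n * Complex.exp (t * (w - 1 / 2)) /
            ((2 : ℂ) ^ (z₂ - z₁) * w ^ ((n : ℤ) + 1 + z₂ - z₁)) := by
  have hintegrand : ∀ w : ℂ, (1 - w) ^ n * exp (t * (w - 1 / 2)) /
      ((2 : ℂ) ^ (z₂ - z₁) * w ^ ((n : ℤ) + 1 + z₂ - z₁))
        = exp (-(t / 2)) * 2 ^ (z₁ - z₂) *
          ((1 - w) ^ n * exp (t * w) / w ^ ((n : ℤ) + 1 + (z₂ - z₁))) := by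
    intro w
    rw [show z₁ - z₂ = -(z₂ - z₁) by ring, zpow_neg, add_sub_assoc,
      show (t : ℂ) * (w - 1 / 2) = t * w + -(t / 2) by ring, exp_add]
    ring
  simp_rw [hintegrand]
  rw [circleIntegral.integral_const_mul, circleIntegral_one_sub_pow_mul_exp_div_zpow _ hR,
    tsum_mul_QinvPow, mul_sum, mul_sum, mul_sum]
  refine sum_congr rfl fun j _ => ?_
  rw [expNablaMinusKer_eq, show -(((-(t / 2) : ℝ)) : ℂ) = 2⁻¹ * t by push_cast; ring, expCoeff_mul,
    show z₂ - (z₁ - j) = z₂ - z₁ + j by ring]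
  have hpow : (2 : ℂ) ^ j * 2⁻¹ ^ (z₂ - z₁ + j) = 2 ^ (z₁ - z₂) := by
    rw [inv_zpow', ← zpow_natCast, ← zpow_add₀ two_ne_zero]
    ring_nf
  rw [← hpow]
  push_cast
  field_simp
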